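/- arXiv:1505.04040 — 3 statements merged into one kernel-verified Lean document; each statement's English description precedes it below -/
import Mathlib

section
/- For complex numbers c₁ ≠ c₂, natural numbers s₁, s₂ ≥ 1, and any complex x with x ≠ -c₁ and x ≠ -c₂, one has 1/((x+c₁)^{s₁}(x+c₂)^{s₂}) = Σ_{k₁+k₂ = s₁+s₂, k₁,k₂ ≥ 1} [ (-1)^{s₂} binom(k₂-1, s₂-1) / ((c₁-c₂)^{k₂}(x+c₁)^{k₁}) + (-1)^{s₁} binom(k₁-1, s₁-1) / ((c₂-c₁)^{k₁}(x+c₂)^{k₂}) ]. -/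
/-!
Put `y = x + c₁`, `z = x + c₂`, `p = z / (z - y)` and `q = y / (y - z)`, so that `p + q = 1`.
The negative binomial identity
`p ^ s₂ * ∑_{j < s₁} C(s₂ - 1 + j, j) q ^ j + q ^ s₁ * ∑_{j < s₂} C(s₁ - 1 + j, j) p ^ j = 1`
(in Bernoulli trials, either the `s₂`-th success or the `s₁`-th failure comes first) turns,
after division by `y ^ s₁ * z ^ s₂`, term by term into the partial fraction decomposition.
-/

open Finset

section CommRing

variable {R : Type*} [CommRing R]

/-- A truncation of `(1 - p) * (1 - p)⁻¹ ^ (a + 2) = (1 - p)⁻¹ ^ (a + 1)`. -/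
theorem one_sub_mul_sum_range_choose_succ_mul_pow (p : R) (a b : ℕ) :
    (1 - p) * ∑ j ∈ range (b + 1), ((a + 1 + j).choose (a + 1) : R) * p ^ j
      + ((a + 1 + b).choose (a + 1) : R) * p ^ (b + 1)
      = ∑ j ∈ range (b + 1), ((a + j).choose a : R) * p ^ j := by
  induction b with
  | zero => simp
  | succ b ih =>
    rw [sum_range_succ _ (b + 1), sum_range_succ _ (b + 1), show a + (b + 1) = a + 1 + b by ring,
      show a + 1 + (b + 1) = a + 1 + b + 1 by ring, Nat.choose_succ_succ' (a + 1 + b) a]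
    push_cast
    linear_combination ih

theorem pow_mul_sum_choose_add_pow_mul_sum_choose_of_add_eq_one {p q : R} (h : p + q = 1)
    (a b : ℕ) :
    p ^ (b + 1) * ∑ j ∈ range (a + 1), ((b + j).choose b : R) * q ^ j
      + q ^ (a + 1) * ∑ j ∈ range (b + 1), ((a + j).choose a : R) * p ^ j = 1 := by
  obtain rfl : q = 1 - p := by rw [← h]; ring
  induction a with
  | zero => simp [mul_neg_geom_sum]
  | succ a ih =>
    rw [← one_sub_mul_sum_range_choose_succ_mul_pow p a b] at ih
    rw [sum_range_succ, show b + (a + 1) = a + 1 + b by ring, ← Nat.choose_symm_add]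
    linear_combination ih

end CommRing

theorem sum_Ioo_zero_eq_sum_range_sub {M : Type*} [AddCommMonoid M] {f : ℕ → M} {m N : ℕ}
    (hmN : m < N) (hf : ∀ k, m < k → k < N → f k = 0) :
    ∑ k ∈ Ioo 0 N, f k = ∑ j ∈ range m, f (m - j) := by
  rw [range_eq_Ico, sum_Ico_reflect f 0 (Nat.le_succ m), Nat.add_sub_cancel_left, Nat.sub_zero]
  refine (sum_subset (fun k hk => ?_) fun k hk hk' => hf k ?_ ?_).symm
  · simp only [mem_Ico, mem_Ioo] at hk ⊢; omega
  all_goals simp only [mem_Ico, mem_Ioo] at hk hk'; omega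

theorem sum_Ioo_zero_eq_sum_range_add {M : Type*} [AddCommMonoid M] {f : ℕ → M} {m N : ℕ}
    (hm : 0 < m) (hf : ∀ k, 0 < k → k < m → f k = 0) :
    ∑ k ∈ Ioo 0 N, f k = ∑ j ∈ range (N - m), f (m + j) := by
  rw [← sum_Ico_eq_sum_range]
  refine (sum_subset (fun k hk => ?_) fun k hk hk' => hf k ?_ ?_).symm
  · simp only [mem_Ico, mem_Ioo] at hk ⊢; omega
  all_goals simp only [mem_Ico, mem_Ioo] at hk hk'; omega

section Field

variable {K : Type*} [Field K] {y z : K}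

theorem div_sub_pow_mul_div_sub_pow_div (hy : y ≠ 0) (hz : z ≠ 0) (hyz : y ≠ z) (c : K)
    {j m : ℕ} (hj : j ≤ m) (n : ℕ) :
    (z / (z - y)) ^ n * (c * (y / (y - z)) ^ j) / (y ^ m * z ^ n)
      = (-1) ^ n * c / ((y - z) ^ (n + j) * y ^ (m - j)) := by
  obtain ⟨i, rfl⟩ := Nat.exists_eq_add_of_le hj
  have hyz' : y - z ≠ 0 := sub_ne_zero.mpr hyz
  rw [Nat.add_sub_cancel_left, ← neg_sub y z, div_pow, div_pow, neg_pow, pow_add, pow_add]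
  field_simp
  simp [← pow_mul]

theorem one_div_pow_mul_pow_eq_sum_range (hy : y ≠ 0) (hz : z ≠ 0) (hyz : y ≠ z) (a b : ℕ) :
    1 / (y ^ (a + 1) * z ^ (b + 1))
      = ∑ j ∈ range (a + 1),
          (-1) ^ (b + 1) * ((b + j).choose b : K) / ((y - z) ^ (b + 1 + j) * y ^ (a + 1 - j))
        + ∑ j ∈ range (b + 1),
          (-1) ^ (a + 1) * ((a + j).choose a : K) / ((z - y) ^ (a + 1 + j) * z ^ (b + 1 - j)) := by
  have hpq : z / (z - y) + y / (y - z) = 1 := by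
    rw [← neg_sub z y, div_neg, ← sub_eq_add_neg, ← sub_div, div_self (sub_ne_zero.mpr hyz.symm)]
  conv_lhs => rw [← pow_mul_sum_choose_add_pow_mul_sum_choose_of_add_eq_one hpq a b]
  rw [add_div, mul_sum, mul_sum, sum_div, sum_div]
  congr 1 <;> refine sum_congr rfl fun j hj => ?_
  · exact div_sub_pow_mul_div_sub_pow_div hy hz hyz _ (mem_range.mp hj).le _
  · rw [mul_comm (y ^ _)]
    exact div_sub_pow_mul_div_sub_pow_div hz hy hyz.symm _ (mem_range.mp hj).le _

theorem one_div_pow_mul_pow_eq_sum_Ioo (hy : y ≠ 0) (hz : z ≠ 0) (hyz : y ≠ z) {s₁ s₂ : ℕ}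
    (hs₁ : 1 ≤ s₁) (hs₂ : 1 ≤ s₂) :
    1 / (y ^ s₁ * z ^ s₂) =
      ∑ k ∈ Ioo 0 (s₁ + s₂),
        ((-1) ^ s₂ * ((s₁ + s₂ - k - 1).choose (s₂ - 1) : K) / ((y - z) ^ (s₁ + s₂ - k) * y ^ k)
          + (-1) ^ s₁ * ((k - 1).choose (s₁ - 1) : K) / ((z - y) ^ k * z ^ (s₁ + s₂ - k))) := by
  obtain ⟨a, rfl⟩ := Nat.exists_eq_add_of_le' hs₁
  obtain ⟨b, rfl⟩ := Nat.exists_eq_add_of_le' hs₂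
  rw [sum_add_distrib, sum_Ioo_zero_eq_sum_range_sub (m := a + 1) (by omega),
    sum_Ioo_zero_eq_sum_range_add (m := a + 1) (by omega), Nat.add_sub_cancel_left,
    one_div_pow_mul_pow_eq_sum_range hy hz hyz]
  · congr 1 <;> refine sum_congr rfl fun j hj => ?_ <;> have hj' := mem_range.mp hj
    · rw [show a + 1 + (b + 1) - (a + 1 - j) - 1 = b + j by omega,
        show a + 1 + (b + 1) - (a + 1 - j) = b + 1 + j by omega, add_tsub_cancel_right]
    · rw [show a + 1 + j - 1 = a + j by omega,
        show a + 1 + (b + 1) - (a + 1 + j) = b + 1 - j by omega, add_tsub_cancel_right]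
  · intro k _ hk
    rw [Nat.choose_eq_zero_of_lt (by omega : k - 1 < a + 1 - 1), Nat.cast_zero, mul_zero, zero_div]
  · intro k hk hkN
    rw [Nat.choose_eq_zero_of_lt (by omega : a + 1 + (b + 1) - k - 1 < b + 1 - 1), Nat.cast_zero,
      mul_zero, zero_div]

end Field

theorem partial_fraction_decomposition
    (c₁ c₂ : ℂ) (hc : c₁ ≠ c₂) (s₁ s₂ : ℕ) (hs₁ : 1 ≤ s₁) (hs₂ : 1 ≤ s₂)
    (x : ℂ) (hx₁ : x ≠ -c₁) (hx₂ : x ≠ -c₂) :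
    1 / ((x + c₁) ^ s₁ * (x + c₂) ^ s₂) =
      ∑ k ∈ Finset.Ioo 0 (s₁ + s₂),
        ((-1 : ℂ) ^ s₂ * (Nat.choose (s₁ + s₂ - k - 1) (s₂ - 1) : ℂ) /
            ((c₁ - c₂) ^ (s₁ + s₂ - k) * (x + c₁) ^ k) +
         (-1 : ℂ) ^ s₁ * (Nat.choose (k - 1) (s₁ - 1) : ℂ) /
            ((c₂ - c₁) ^ k * (x + c₂) ^ (s₁ + s₂ - k))) := by
  have hy : x + c₁ ≠ 0 := fun h => hx₁ (eq_neg_of_add_eq_zero_left h)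
  have hz : x + c₂ ≠ 0 := fun h => hx₂ (eq_neg_of_add_eq_zero_left h)
  have hyz : x + c₁ ≠ x + c₂ := (add_right_injective x).ne hc
  simpa only [add_sub_add_left_eq_sub] using one_div_pow_mul_pow_eq_sum_Ioo hy hz hyz hs₁ hs₂
end

section
/- For p, q ≥ 1 natural numbers with (p,q) ≠ (1,1) and τ in the upper half-plane, the double Eisenstein-type series G̃_{2p,2q}(τ) = Σ_{m∈ℤ} Σ_{n₁∈ℤ, (m,n₁)≠(0,0)} Σ_{n₂∈ℤ, (m,n₂)≠(0,0)} 1/((m+n₁τ)^{2p}(m+n₂τ)^{2q}) converges absolutely. -/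
/-!
Write `⟨a⟩ = max 1 |a|`. For `(m, n) ≠ (0, 0)` the Eisenstein bound `r τ * max |m| |n| ≤ |m + nτ|`
reads `r τ * max ⟨m⟩ ⟨n⟩ ≤ |m + nτ|`. Since one of the exponents `2p`, `2q` is at least `4`, the
product `max ⟨m⟩ ⟨n₁⟩ ^ (2p) * max ⟨m⟩ ⟨n₂⟩ ^ (2q)` dominates `⟨m⟩² ⟨n₁⟩² ⟨n₂⟩²`, so the series is
dominated by a constant times the product of three copies of the summable `∑ₐ ⟨a⟩⁻²`.
-/

open EisensteinSeries UpperHalfPlane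

lemma summable_inv_max_one_abs_sq : Summable fun a : ℤ => (max 1 |(a : ℝ)| ^ 2)⁻¹ := by
  refine (Real.summable_one_div_int_pow.mpr one_lt_two).congr_cofinite ?_
  filter_upwards [(Set.finite_singleton (0 : ℤ)).compl_mem_cofinite] with a ha
  have ha : (1 : ℝ) ≤ |(a : ℝ)| := by exact_mod_cast Int.one_le_abs ha
  rw [max_eq_right ha, sq_abs, one_div]

lemma max_max_one_abs_eq {m n : ℤ} (h : ¬(m = 0 ∧ n = 0)) :
    max (max 1 |(m : ℝ)|) (max 1 |(n : ℝ)|) = max |(m : ℝ)| |(n : ℝ)| := by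
  have : (1 : ℝ) ≤ max |(m : ℝ)| |(n : ℝ)| := by
    rcases not_and_or.mp h with h | h
    · exact le_max_of_le_left (by exact_mod_cast Int.one_le_abs h)
    · exact le_max_of_le_right (by exact_mod_cast Int.one_le_abs h)
  rw [max_max_max_comm, max_self, max_eq_right this]

lemma r_mul_max_max_one_abs_le (z : ℍ) {m n : ℤ} (h : ¬(m = 0 ∧ n = 0)) :
    r z * max (max 1 |(m : ℝ)|) (max 1 |(n : ℝ)|) ≤ ‖(m : ℂ) + n * z‖ := by
  have hx : ![n, m] ≠ 0 := fun hx => h ⟨by simpa using congrFun hx 1, by simpa using congrFun hx 0⟩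
  have := r_mul_max_le z hx
  rw [norm_eq_max_natAbs] at this
  rw [max_max_one_abs_eq h]
  simpa [max_comm, add_comm] using this

lemma sq_mul_sq_mul_sq_le_of_two_le {a b c : ℝ} (ha : 1 ≤ a) (hb : 1 ≤ b) (hc : 1 ≤ c)
    {p q : ℕ} (hp : 2 ≤ p) (hq : 1 ≤ q) :
    a ^ 2 * b ^ 2 * c ^ 2 ≤ max a b ^ (2 * p) * max a c ^ (2 * q) := by
  have hab : 1 ≤ max a b := le_max_of_le_left ha
  have hac : 1 ≤ max a c := le_max_of_le_left ha
  gcongr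
  · calc a ^ 2 * b ^ 2 ≤ max a b ^ 2 * max a b ^ 2 := by gcongr <;> simp
      _ = max a b ^ 4 := by ring
      _ ≤ max a b ^ (2 * p) := pow_le_pow_right₀ hab (by omega)
  · calc c ^ 2 ≤ max a c ^ 2 := by gcongr; simp
      _ ≤ max a c ^ (2 * q) := pow_le_pow_right₀ hac (by omega)

lemma sq_mul_sq_mul_sq_le {a b c : ℝ} (ha : 1 ≤ a) (hb : 1 ≤ b) (hc : 1 ≤ c)
    {p q : ℕ} (hp : 1 ≤ p) (hq : 1 ≤ q) (hpq : (p, q) ≠ (1, 1)) :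
    a ^ 2 * b ^ 2 * c ^ 2 ≤ max a b ^ (2 * p) * max a c ^ (2 * q) := by
  rcases (show 2 ≤ p ∨ 2 ≤ q by grind) with hp | hq
  · exact sq_mul_sq_mul_sq_le_of_two_le ha hb hc hp hq
  · calc a ^ 2 * b ^ 2 * c ^ 2 = a ^ 2 * c ^ 2 * b ^ 2 := by ring
      _ ≤ max a c ^ (2 * q) * max a b ^ (2 * p) := sq_mul_sq_mul_sq_le_of_two_le ha hc hb hq hp
      _ = max a b ^ (2 * p) * max a c ^ (2 * q) := mul_comm _ _

lemma norm_one_div_pow_mul_pow_le (z : ℍ) {m n₁ n₂ : ℤ} (h₁ : ¬(m = 0 ∧ n₁ = 0))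
    (h₂ : ¬(m = 0 ∧ n₂ = 0)) {p q : ℕ} (hp : 1 ≤ p) (hq : 1 ≤ q) (hpq : (p, q) ≠ (1, 1)) :
    ‖1 / (((m : ℂ) + n₁ * z) ^ (2 * p) * ((m : ℂ) + n₂ * z) ^ (2 * q))‖ ≤
      (r z ^ (2 * p + 2 * q))⁻¹ * ((max 1 |(m : ℝ)| ^ 2)⁻¹ *
        ((max 1 |(n₁ : ℝ)| ^ 2)⁻¹ * (max 1 |(n₂ : ℝ)| ^ 2)⁻¹)) := by
  set a := max 1 |(m : ℝ)|
  set b := max 1 |(n₁ : ℝ)|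
  set c := max 1 |(n₂ : ℝ)|
  have hr := r_pos z
  have hlower : r z ^ (2 * p + 2 * q) * (a ^ 2 * b ^ 2 * c ^ 2) ≤
      ‖(m : ℂ) + n₁ * z‖ ^ (2 * p) * ‖(m : ℂ) + n₂ * z‖ ^ (2 * q) :=
    calc r z ^ (2 * p + 2 * q) * (a ^ 2 * b ^ 2 * c ^ 2)
        ≤ r z ^ (2 * p + 2 * q) * (max a b ^ (2 * p) * max a c ^ (2 * q)) :=
          mul_le_mul_of_nonneg_left (sq_mul_sq_mul_sq_le (le_max_left _ _) (le_max_left _ _)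
            (le_max_left _ _) hp hq hpq) (by positivity)
      _ = (r z * max a b) ^ (2 * p) * (r z * max a c) ^ (2 * q) := by ring
      _ ≤ _ := by
          gcongr
          exacts [r_mul_max_max_one_abs_le z h₁, r_mul_max_max_one_abs_le z h₂]
  have ha : 0 < a := lt_max_of_lt_left one_pos
  have hb : 0 < b := lt_max_of_lt_left one_pos
  have hc : 0 < c := lt_max_of_lt_left one_pos
  rw [norm_div, norm_one, norm_mul, norm_pow, norm_pow]
  calc 1 / (‖(m : ℂ) + n₁ * z‖ ^ (2 * p) * ‖(m : ℂ) + n₂ * z‖ ^ (2 * q))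
      ≤ 1 / (r z ^ (2 * p + 2 * q) * (a ^ 2 * b ^ 2 * c ^ 2)) :=
        one_div_le_one_div_of_le (by positivity) hlower
    _ = _ := by field_simp

theorem doubleEisenstein_summable (p q : ℕ) (hp : 1 ≤ p) (hq : 1 ≤ q)
    (hpq : (p, q) ≠ (1, 1)) (τ : ℂ) (hτ : 0 < τ.im) :
    Summable (fun x : ℤ × ℤ × ℤ =>
      ‖(if (x.1 = 0 ∧ x.2.1 = 0) ∨ (x.1 = 0 ∧ x.2.2 = 0) then (0 : ℂ)
        else 1 / (((x.1 : ℂ) + x.2.1 * τ) ^ (2 * p) *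
                  ((x.1 : ℂ) + x.2.2 * τ) ^ (2 * q)))‖) := by
  let z : ℍ := ⟨τ, hτ⟩
  have hw := summable_inv_max_one_abs_sq
  have hw_nonneg (a : ℤ) : 0 ≤ (max 1 |(a : ℝ)| ^ 2)⁻¹ := by positivity
  have hdom : Summable fun x : ℤ × ℤ × ℤ => (r z ^ (2 * p + 2 * q))⁻¹ *
      ((max 1 |(x.1 : ℝ)| ^ 2)⁻¹ * ((max 1 |(x.2.1 : ℝ)| ^ 2)⁻¹ * (max 1 |(x.2.2 : ℝ)| ^ 2)⁻¹)) :=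
    (hw.mul_of_nonneg (hw.mul_of_nonneg hw hw_nonneg hw_nonneg) hw_nonneg
      fun _ => mul_nonneg (hw_nonneg _) (hw_nonneg _)).mul_left _
  refine hdom.of_nonneg_of_le (fun _ => norm_nonneg _) fun ⟨m, n₁, n₂⟩ => ?_
  split_ifs with h
  · have := r_pos z
    rw [norm_zero]
    positivity
  · exact norm_one_div_pow_mul_pow_le z (by tauto) (by tauto) hp hq hpq
end

section
/- For r ≥ 2 and positive integers p₁,…,p_r with (p₁,…,p_r) ≠ (1,…,1), the multiple series G̃_{2p₁,…,2p_r}(τ) = Σ_{m∈ℤ} Σ_{n₁: (m,n₁)≠(0,0)} ⋯ Σ_{n_r: (m,n_r)≠(0,0)} Π_{j=1}^r 1/(m+n_jτ)^{2p_j} converges absolutely for every τ in the upper half-plane. -/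
/-!
For `τ` in the upper half-plane there is `d > 0` with `d * max |m| |n| ≤ |m + nτ|`, so each factor
with `p j ≥ 1` is at most `d ^ (-2 p j) * max |m| |n| ^ (-2)`. Splitting the exponent
`2 = 3/4 + 5/4` bounds this by `⌈m⌉ ^ (-3/4) * ⌈n j⌉ ^ (-5/4)`, where `⌈x⌉ = max 1 |x|`, so the
series is dominated by `C * ∑ₘ ⌈m⌉ ^ (-3r/4) * ∏ⱼ ∑ₙ ⌈n⌉ ^ (-5/4)`, which converges since
`3r/4 > 1` for `r ≥ 2`.
-/

open Finset

lemma summable_prod_apply_of_nonneg {ι : Type*} {f : ι → ℝ} (hf : Summable f) (hf₀ : 0 ≤ f)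
    (k : ℕ) : Summable fun v : Fin k → ι => ∏ j, f (v j) := by
  induction k with
  | zero => exact .of_finite
  | succ k ih =>
    have hmul : Summable fun x : ι × (Fin k → ι) => f x.1 * ∏ j, f (x.2 j) :=
      hf.mul_of_nonneg (g := fun v : Fin k → ι => ∏ j, f (v j)) ih hf₀
        fun v => prod_nonneg fun j _ => hf₀ _
    refine (Fin.consEquiv fun _ => ι).summable_iff.mp (hmul.congr fun x => ?_)
    simp [Fin.prod_univ_succ]

lemma summable_max_one_abs_rpow_neg {s : ℝ} (hs : 1 < s) :
    Summable fun n : ℤ => max 1 |(n : ℝ)| ^ (-s) := by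
  refine (Real.summable_abs_int_rpow hs).of_norm_bounded_eventually ?_
  filter_upwards [(Set.finite_singleton (0 : ℤ)).compl_mem_cofinite] with n hn
  have hn1 : 1 ≤ |(n : ℝ)| := mod_cast Int.one_le_abs (by simpa using hn)
  rw [max_eq_right hn1, Real.norm_of_nonneg (by positivity)]

lemma exists_pos_mul_max_abs_le_norm {τ : ℂ} (hτ : 0 < τ.im) :
    ∃ d > 0, ∀ m n : ℤ, d * max |(m : ℝ)| |(n : ℝ)| ≤ ‖(m : ℂ) + n * τ‖ := by
  let z : UpperHalfPlane := ⟨τ, hτ⟩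
  refine ⟨EisensteinSeries.r z, EisensteinSeries.r_pos z, fun m n => ?_⟩
  rcases eq_or_ne ![n, m] 0 with h | h
  · have hn : n = 0 := congrFun h 0
    have hm : m = 0 := congrFun h 1
    simp [hm, hn]
  · have := EisensteinSeries.r_mul_max_le z h
    rw [EisensteinSeries.norm_eq_max_natAbs] at this
    simpa [max_comm, add_comm, z] using this

lemma max_abs_rpow_neg_add_le {x y a b : ℝ} (ha : 0 ≤ a) (hb : 0 ≤ b) (hxy : 1 ≤ max |x| |y|) :
    max |x| |y| ^ (-(a + b)) ≤ max 1 |x| ^ (-a) * max 1 |y| ^ (-b) := by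
  have hM : 0 < max |x| |y| := zero_lt_one.trans_le hxy
  rw [neg_add, Real.rpow_add hM]
  exact mul_le_mul
    (Real.rpow_le_rpow_of_nonpos (by positivity) (max_le hxy (le_max_left _ _)) (by linarith))
    (Real.rpow_le_rpow_of_nonpos (by positivity) (max_le hxy (le_max_right _ _)) (by linarith))
    (by positivity) (by positivity)

lemma norm_one_div_pow_two_mul_le {w : ℂ} {d M : ℝ} (hd : 0 < d) (hM : 1 ≤ M) (hw : d * M ≤ ‖w‖)
    {k : ℕ} (hk : 1 ≤ k) : ‖1 / w ^ (2 * k)‖ ≤ (d ^ (2 * k))⁻¹ * M ^ (-2 : ℝ) := by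
  have hM₀ : 0 < M := zero_lt_one.trans_le hM
  have hMk : M ^ 2 ≤ M ^ (2 * k) := pow_le_pow_right₀ hM (by omega)
  calc ‖1 / w ^ (2 * k)‖ = (‖w‖ ^ (2 * k))⁻¹ := by rw [norm_div, norm_one, norm_pow, one_div]
    _ ≤ ((d * M) ^ (2 * k))⁻¹ := by gcongr
    _ = (d ^ (2 * k))⁻¹ * (M ^ (2 * k))⁻¹ := by rw [mul_pow, mul_inv]
    _ ≤ (d ^ (2 * k))⁻¹ * (M ^ 2)⁻¹ := by gcongr
    _ = (d ^ (2 * k))⁻¹ * M ^ (-2 : ℝ) := by rw [Real.rpow_neg hM₀.le, Real.rpow_two]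

lemma norm_prod_one_div_pow_le {r : ℕ} {p : Fin r → ℕ} (hp : ∀ j, 1 ≤ p j) {τ : ℂ} {d : ℝ}
    (hd : 0 < d) (hτ : ∀ m n : ℤ, d * max |(m : ℝ)| |(n : ℝ)| ≤ ‖(m : ℂ) + n * τ‖)
    {m : ℤ} {n : Fin r → ℤ} (hmn : ¬∃ j, m = 0 ∧ n j = 0) :
    ‖∏ j, 1 / ((m : ℂ) + n j * τ) ^ (2 * p j)‖ ≤
      (∏ j, (d ^ (2 * p j))⁻¹) *
        ((max 1 |(m : ℝ)| ^ (-(3 / 4) : ℝ)) ^ r * ∏ j, max 1 |(n j : ℝ)| ^ (-(5 / 4) : ℝ)) := by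
  have hM (j : Fin r) : 1 ≤ max |(m : ℝ)| |(n j : ℝ)| := by
    by_cases hm : m = 0
    · exact le_max_of_le_right (mod_cast Int.one_le_abs fun hn => hmn ⟨j, hm, hn⟩)
    · exact le_max_of_le_left (mod_cast Int.one_le_abs hm)
  have hfactor (j : Fin r) : ‖1 / ((m : ℂ) + n j * τ) ^ (2 * p j)‖ ≤ (d ^ (2 * p j))⁻¹ *
      (max 1 |(m : ℝ)| ^ (-(3 / 4) : ℝ) * max 1 |(n j : ℝ)| ^ (-(5 / 4) : ℝ)) := by
    refine (norm_one_div_pow_two_mul_le hd (hM j) (hτ m (n j)) (hp j)).trans ?_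
    have hsplit :=
      max_abs_rpow_neg_add_le (a := 3 / 4) (b := 5 / 4) (by norm_num) (by norm_num) (hM j)
    rw [show (3 / 4 + 5 / 4 : ℝ) = 2 by norm_num] at hsplit
    gcongr
  calc ‖∏ j, 1 / ((m : ℂ) + n j * τ) ^ (2 * p j)‖
      ≤ ∏ j, (d ^ (2 * p j))⁻¹ *
          (max 1 |(m : ℝ)| ^ (-(3 / 4) : ℝ) * max 1 |(n j : ℝ)| ^ (-(5 / 4) : ℝ)) := by
        rw [norm_prod]
        exact prod_le_prod (fun j _ => norm_nonneg _) fun j _ => hfactor j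
    _ = _ := by rw [prod_mul_distrib, prod_mul_distrib, prod_const, card_univ, Fintype.card_fin]

theorem multipleEisenstein_summable_general (r : ℕ) (hr : 2 ≤ r) (p : Fin r → ℕ)
    (hp : ∀ j, 1 ≤ p j) (τ : ℂ) (hτ : 0 < τ.im) :
    Summable (fun x : ℤ × (Fin r → ℤ) =>
      ‖(if ∃ j, x.1 = 0 ∧ x.2 j = 0 then (0 : ℂ)
        else ∏ j, 1 / ((x.1 : ℂ) + x.2 j * τ) ^ (2 * p j))‖) := by
  obtain ⟨d, hd, hlow⟩ := exists_pos_mul_max_abs_le_norm hτ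
  have ha : Summable fun m : ℤ => (max 1 |(m : ℝ)| ^ (-(3 / 4) : ℝ)) ^ r := by
    refine (summable_max_one_abs_rpow_neg (s := 3 / 4 * r) ?_).congr fun m => ?_
    · have : (2 : ℝ) ≤ r := mod_cast hr
      linarith
    · rw [← Real.rpow_mul_natCast (by positivity), neg_mul]
  have hb := summable_max_one_abs_rpow_neg (s := 5 / 4) (by norm_num)
  have hmajorant := (ha.mul_of_nonneg (summable_prod_apply_of_nonneg hb (fun _ => by positivity) r)
    (fun _ => by positivity) fun _ => by positivity).mul_left (∏ j, (d ^ (2 * p j))⁻¹)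
  refine hmajorant.of_nonneg_of_le (fun _ => norm_nonneg _) fun x => ?_
  split_ifs with h
  · rw [norm_zero]
    positivity
  · exact norm_prod_one_div_pow_le hp hd hlow h

theorem multipleEisenstein_summable (r : ℕ) (hr : 2 ≤ r) (p : Fin r → ℕ)
    (hp : ∀ j, 1 ≤ p j) (hp1 : p ≠ fun _ => 1) (τ : ℂ) (hτ : 0 < τ.im) :
    Summable (fun x : ℤ × (Fin r → ℤ) =>
      ‖(if ∃ j, x.1 = 0 ∧ x.2 j = 0 then (0 : ℂ)
        else ∏ j, 1 / ((x.1 : ℂ) + x.2 j * τ) ^ (2 * p j))‖) :=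
  multipleEisenstein_summable_general r hr p hp τ hτ
end
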